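/- arXiv:1509.06430 — 3 statements merged into one kernel-verified Lean document; each statement's English description precedes it below -/
import Mathlib

section
/- Suppose the probabilities P_Ω satisfy the Shearer criterion. Given distinct bad events B_1, …, B_s, the total weight of all (isomorphism classes of) witness DAGs having exactly s sink nodes labeled B_1, …, B_s is at most Π_{i=1}^{s} μ(B_i). -/
/-!
Split a witness DAG whose sinks are `B 0, …, B (s-1)` into parts: a node lies in part `i` if
`B i` is the sink of least index reachable from it, and at level `ℓ` if `ℓ` is the length of the
longest path from it inside its part. The labels on the levels of part `i` form a sequence
`{B i} = I₀, I₁, …` of nonempty independent sets, each event of `I_{t+1}` depending on one of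
`I_t`. An edge joins two nodes iff their labels are dependent, and it points to the smaller part,
or within a part to the lower level; so these `s` sequences determine the DAG up to isomorphism,
and the weight of the DAG is the product of their weights.

With `Z(T)` the signed independence polynomial on `T` and `N(I)` the events depending on `I`,
`Q(I) = p^I Z(E \ (I ∪ N(I)))` while `∑ Q(J)` over the independent `J ⊆ N(I)` is `Z(E \ N(I))`;
the two `Z` differ by a factor `∏ (1 - p b) ≤ 1` over the events of `I` that depend on nothing.
Hence `p^I ∑_J Q(J) ≤ Q(I)`, and by induction on the length the level sequences starting at an
independent `I` have total weight at most `Q(I)/Q(∅)`.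
-/

open scoped BigOperators ENNReal Classical

namespace LLL

/-- Two bad events are dependent iff their variable sets intersect. -/
def Dep {n : ℕ} {E : Type} (S : E → Finset (Fin n)) (b b' : E) : Prop :=
  (S b ∩ S b').Nonempty

/-- A witness DAG: a finite DAG with nodes labeled by bad events, where any two
nodes with dependent labels are joined by an edge (in one direction), and nodes
with non-dependent labels have no edge. -/
structure WDag (n : ℕ) (E : Type) (S : E → Finset (Fin n)) where
  size : ℕ
  label : Fin size → E
  edge : Fin size → Fin size → Prop
  acyclic : ∀ v, ¬ Relation.TransGen edge v v
  edge_dep : ∀ v w, edge v w → Dep S (label v) (label w)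
  dep_edge : ∀ v w, v ≠ w → Dep S (label v) (label w) → edge v w ∨ edge w v

namespace WDag

variable {n : ℕ} {E : Type} {S : E → Finset (Fin n)}

/-- Isomorphism of witness DAGs. -/
def Iso (G G' : WDag n E S) : Prop :=
  ∃ e : Fin G.size ≃ Fin G'.size,
    (∀ v, G'.label (e v) = G.label v) ∧ ∀ v w, G'.edge (e v) (e w) ↔ G.edge v w

theorem Iso.refl (G : WDag n E S) : Iso G G :=
  ⟨Equiv.refl _, fun _ => rfl, fun _ _ => Iff.rfl⟩

theorem Iso.symm {G G' : WDag n E S} (h : Iso G G') : Iso G' G := by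
  obtain ⟨e, hl, he⟩ := h
  refine ⟨e.symm, fun v => ?_, fun v w => ?_⟩
  · simpa using (hl (e.symm v)).symm
  · simpa using (he (e.symm v) (e.symm w)).symm

theorem Iso.trans {G₁ G₂ G₃ : WDag n E S} (h12 : Iso G₁ G₂) (h23 : Iso G₂ G₃) :
    Iso G₁ G₃ := by
  obtain ⟨e, hl, he⟩ := h12
  obtain ⟨f, hl', he'⟩ := h23
  refine ⟨e.trans f, fun v => ?_, fun v w => ?_⟩
  · rw [Equiv.trans_apply, hl' (e v), hl v]
  · rw [Equiv.trans_apply, Equiv.trans_apply, he' (e v) (e w), he v w]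

instance wdSetoid (n : ℕ) (E : Type) (S : E → Finset (Fin n)) : Setoid (WDag n E S) :=
  ⟨Iso, ⟨Iso.refl, Iso.symm, Iso.trans⟩⟩

/-- Isomorphism classes of witness DAGs. -/
def WClass (n : ℕ) (E : Type) (S : E → Finset (Fin n)) : Type :=
  Quotient (wdSetoid n E S)

/-- The weight of a witness DAG: the product of the probabilities of its labels. -/
noncomputable def wt (P : E → ℝ) (G : WDag n E S) : ℝ := ∏ v, P (G.label v)

theorem wt_invariant (P : E → ℝ) {G G' : WDag n E S} (h : Iso G G') :
    wt P G = wt P G' := by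
  obtain ⟨e, hl, _⟩ := h
  exact Fintype.prod_equiv e (fun v => P (G.label v)) (fun v => P (G'.label v))
    (fun v => by simp only [hl v])

/-- The weight, as a function on isomorphism classes. -/
noncomputable def cwt (P : E → ℝ) : WClass n E S → ℝ :=
  Quotient.lift (wt P) fun _ _ h => wt_invariant P h

theorem size_invariant {G G' : WDag n E S} (h : Iso G G') : G.size = G'.size := by
  obtain ⟨e, -, -⟩ := h
  simpa using Fintype.card_congr e

/-- The adjusted weight `a_ρ(G) = w(G) (1+ρ)^{|G|}`. -/
noncomputable def awt (P : E → ℝ) (ρ : ℝ) (G : WDag n E S) : ℝ :=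
  wt P G * (1 + ρ) ^ G.size

theorem awt_invariant (P : E → ℝ) (ρ : ℝ) {G G' : WDag n E S} (h : Iso G G') :
    awt P ρ G = awt P ρ G' := by
  unfold awt
  rw [wt_invariant P h, size_invariant h]

/-- The adjusted weight, as a function on isomorphism classes. -/
noncomputable def cawt (P : E → ℝ) (ρ : ℝ) : WClass n E S → ℝ :=
  Quotient.lift (awt P ρ) fun _ _ h => awt_invariant P ρ h

/-- A node is a sink if it has no outgoing edge. -/
def IsSink (G : WDag n E S) (v : Fin G.size) : Prop := ∀ w, ¬ G.edge v w

/-- A witness DAG has a single sink. -/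
def SingleSink (G : WDag n E S) : Prop := ∃! v, IsSink G v

/-- A witness DAG has a single sink, labeled by `b`. -/
def SinkLabeled (G : WDag n E S) (b : E) : Prop :=
  ∃ v, IsSink G v ∧ G.label v = b ∧ ∀ w, IsSink G w → w = v

end WDag

/-- A set of bad events is independent if no two distinct members are dependent. -/
def Indep {n : ℕ} {E : Type} (S : E → Finset (Fin n)) (I : Finset E) : Prop :=
  ∀ b ∈ I, ∀ b' ∈ I, b ≠ b' → ¬ Dep S b b'

/-- The independent-set polynomial `Q(I,p)`. -/
noncomputable def Q {n : ℕ} {E : Type} [Fintype E] (S : E → Finset (Fin n))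
    (p : E → ℝ) (I : Finset E) : ℝ :=
  ∑ J ∈ Finset.univ.filter (fun J : Finset E => I ⊆ J ∧ Indep S J),
    (-1 : ℝ) ^ (J.card - I.card) * ∏ b ∈ J, p b

/-- The Shearer criterion for the probability vector `p`. -/
def Shearer {n : ℕ} {E : Type} [Fintype E] (S : E → Finset (Fin n)) (p : E → ℝ) : Prop :=
  0 < Q S p ∅ ∧ ∀ I : Finset E, Indep S I → 0 ≤ Q S p I

/-- A witness DAG has exactly the sinks `B 0, …, B (s-1)`. -/
def WDag.SinksAre {n : ℕ} {E : Type} {S : E → Finset (Fin n)} (G : WDag n E S)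
    {s : ℕ} (B : Fin s → E) : Prop :=
  ∃ f : Fin s → Fin G.size,
    (∀ j, WDag.IsSink G (f j) ∧ G.label (f j) = B j) ∧
    ∀ v, WDag.IsSink G v → ∃ j, f j = v

open Finset Relation

variable {n : ℕ} {E : Type} {S : E → Finset (Fin n)}

theorem neg_one_pow_sub {R : Type*} [CommRing R] {a b : ℕ} (h : b ≤ a) :
    (-1 : R) ^ (a - b) = (-1) ^ a * (-1) ^ b := by
  obtain ⟨c, rfl⟩ := Nat.exists_eq_add_of_le h
  rw [Nat.add_sub_cancel_left, pow_add, mul_right_comm, ← pow_add, ← two_mul, pow_mul]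
  simp

theorem sum_powerset_neg_one_pow_card_sub {J M : Finset E} (hMJ : M ⊆ J) :
    ∑ K ∈ M.powerset, (-1 : ℝ) ^ (J.card - K.card) = if M = ∅ then (-1) ^ J.card else 0 := by
  rw [sum_congr rfl fun K hK => neg_one_pow_sub (card_le_card ((mem_powerset.1 hK).trans hMJ)),
    ← mul_sum]
  have := congrArg (Int.cast : ℤ → ℝ) (sum_powerset_neg_one_pow_card (x := M))
  push_cast at this
  rw [this]
  split_ifs <;> simp

theorem sum_prod_le_prod_sum_image {ι κ α : Type*} [Fintype κ] [DecidableEq α] {F : Finset ι}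
    {Φ : ι → κ → α} (hΦ : Set.InjOn Φ F) {f : κ → α → ℝ} (hf : ∀ k a, 0 ≤ f k a) :
    ∑ c ∈ F, ∏ k, f k (Φ c k) ≤ ∏ k, ∑ a ∈ F.image (Φ · k), f k a := by
  rw [prod_univ_sum, ← sum_image (g := Φ) (f := fun g => ∏ k, f k (g k)) hΦ]
  refine sum_le_sum_of_subset_of_nonneg (fun g hg => ?_) fun g _ _ =>
    prod_nonneg fun k _ => hf k _
  obtain ⟨c, hc, rfl⟩ := mem_image.1 hg
  exact Fintype.mem_piFinset.2 fun k => mem_image_of_mem _ hc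

section ChainHeight

variable {α : Type*} [Fintype α] (r : α → α → Prop) (hr : WellFounded (flip r))

/-- The length of the longest `r`-chain starting at `v`. -/
noncomputable def chainHeight (v : α) : ℕ :=
  hr.fix (C := fun _ => ℕ)
    (fun v ih => (univ.filter (r v)).attach.sup fun w => ih w.1 (mem_filter.1 w.2).2 + 1) v

variable {r}

theorem chainHeight_eq (v : α) :
    chainHeight r hr v = (univ.filter (r v)).sup fun w => chainHeight r hr w + 1 := by
  rw [chainHeight, hr.fix_eq]
  exact sup_attach _ fun w => chainHeight r hr w + 1

theorem chainHeight_lt {v w : α} (h : r v w) : chainHeight r hr w < chainHeight r hr v := by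
  rw [chainHeight_eq hr v, Nat.lt_iff_add_one_le]
  exact le_sup (f := fun w => chainHeight r hr w + 1) (mem_filter.2 ⟨mem_univ w, h⟩)

theorem exists_chainHeight_eq_of_eq_add_one {v : α} {m : ℕ} (h : chainHeight r hr v = m + 1) :
    ∃ w, r v w ∧ chainHeight r hr w = m := by
  rw [chainHeight_eq] at h
  obtain ⟨w, hw, hwm⟩ := exists_mem_eq_sup (univ.filter (r v))
    (nonempty_iff_ne_empty.2 fun he => by simp [he] at h) fun w => chainHeight r hr w + 1
  exact ⟨w, (mem_filter.1 hw).2, by omega⟩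

theorem chainHeight_eq_zero_iff {v : α} : chainHeight r hr v = 0 ↔ ∀ w, ¬ r v w := by
  refine ⟨fun h w hw => by simpa [h] using chainHeight_lt hr hw, fun h => ?_⟩
  rw [chainHeight_eq, filter_false_of_mem fun w _ => h w, sup_empty]
  rfl

theorem exists_reflTransGen_chainHeight_eq {v : α} {j : ℕ} (hj : j ≤ chainHeight r hr v) :
    ∃ w, ReflTransGen r v w ∧ chainHeight r hr w = j := by
  obtain ⟨d, hd⟩ := Nat.exists_eq_add_of_le hj
  induction d generalizing v with
  | zero => exact ⟨v, .refl, hd⟩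
  | succ d ih =>
    obtain ⟨u, hvu, hu⟩ := exists_chainHeight_eq_of_eq_add_one hr hd
    obtain ⟨w, huw, hw⟩ := ih (hu ▸ Nat.le_add_right j d) hu
    exact ⟨w, .head hvu huw, hw⟩

end ChainHeight

theorem Dep.symm {b c : E} (h : Dep S b c) : Dep S c b := by
  rwa [Dep, inter_comm]

theorem Dep.self_left {b c : E} (h : Dep S b c) : Dep S b b := by
  obtain ⟨x, hx⟩ := h
  exact ⟨x, by simp [(mem_inter.1 hx).1]⟩

theorem Indep.mono {I J : Finset E} (hJ : Indep S J) (hIJ : I ⊆ J) : Indep S I :=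
  fun b hb c hc => hJ b (hIJ hb) c (hIJ hc)

theorem indep_empty : Indep S (∅ : Finset E) := by
  simp [Indep]

theorem indep_singleton (b : E) : Indep S {b} := by
  simp [Indep]

theorem Indep.union {I K : Finset E} (hI : Indep S I) (hK : Indep S K)
    (hIK : ∀ b ∈ K, ∀ c ∈ I, ¬ Dep S b c) : Indep S (I ∪ K) := by
  intro b hb c hc hbc
  rcases mem_union.1 hb with hb | hb <;> rcases mem_union.1 hc with hc | hc
  · exact hI b hb c hc hbc
  · exact fun h => hIK c hc b hb h.symm
  · exact hIK b hb c hc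
  · exact hK b hb c hc hbc

noncomputable def indepPoly (S : E → Finset (Fin n)) (p : E → ℝ) (T : Finset E) : ℝ :=
  ∑ K ∈ T.powerset with Indep S K, (-1) ^ K.card * ∏ b ∈ K, p b

theorem indepPoly_insert_of_isolated (p : E → ℝ) {b : E} (hb : ∀ c, ¬ Dep S b c) {T : Finset E}
    (hbT : b ∉ T) : indepPoly S p (insert b T) = (1 - p b) * indepPoly S p T := by
  have hins : ∀ K ⊆ T, Indep S (insert b K) ↔ Indep S K := fun K _ =>
    ⟨fun h => h.mono (subset_insert b K), fun h => by
      rw [insert_eq]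
      exact (indep_singleton b).union h fun c _ d hd hcd => by
        rw [mem_singleton.1 hd] at hcd; exact hb c hcd.symm⟩
  rw [indepPoly, powerset_insert, filter_union, sum_union, filter_image, sum_image, indepPoly]
  · rw [filter_congr fun K hK => hins K (mem_powerset.1 hK), sub_mul, one_mul, sub_eq_add_neg,
      neg_mul_eq_neg_mul, mul_sum]
    congr 1
    refine sum_congr rfl fun K hK => ?_
    have hbK : b ∉ K := fun h => hbT ((mem_powerset.1 (mem_filter.1 hK).1) h)
    rw [card_insert_of_notMem hbK, prod_insert hbK, pow_succ]
    ring
  · intro K hK K' hK' h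
    simp only [mem_coe, mem_filter, mem_powerset] at hK hK'
    rw [← erase_insert (fun h => hbT (hK.1 h)), h, erase_insert (fun h => hbT (hK'.1 h))]
  · refine disjoint_filter_filter (disjoint_left.2 fun K hK hK' => ?_)
    obtain ⟨K', -, rfl⟩ := mem_image.1 hK'
    exact hbT (mem_powerset.1 hK (mem_insert_self b K'))

theorem indepPoly_union_of_isolated (p : E → ℝ) {D T : Finset E}
    (hD : ∀ b ∈ D, ∀ c, ¬ Dep S b c) (hDT : Disjoint D T) :
    indepPoly S p (T ∪ D) = (∏ b ∈ D, (1 - p b)) * indepPoly S p T := by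
  induction D using Finset.induction_on with
  | empty => simp
  | insert b D hbD ih =>
    rw [disjoint_insert_left] at hDT
    rw [union_insert, indepPoly_insert_of_isolated p (hD b (mem_insert_self b D))
      (by simp [hDT.1, hbD]), ih (fun c hc => hD c (mem_insert_of_mem hc)) hDT.2,
      prod_insert hbD, mul_assoc]

noncomputable def seqWeight (p : E → ℝ) (L : List (Finset E)) : ℝ :=
  (L.map fun J => ∏ b ∈ J, p b).prod

@[simp]
theorem seqWeight_cons (p : E → ℝ) (J : Finset E) (L : List (Finset E)) :
    seqWeight p (J :: L) = (∏ b ∈ J, p b) * seqWeight p L := by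
  simp [seqWeight]

theorem seqWeight_nonneg {p : E → ℝ} (hp0 : ∀ b, 0 ≤ p b) (L : List (Finset E)) :
    0 ≤ seqWeight p L :=
  List.prod_nonneg fun _ hx => by
    obtain ⟨J, -, rfl⟩ := List.mem_map.1 hx
    exact prod_nonneg fun b _ => hp0 b

section Shearer

variable [Fintype E]

noncomputable def nbhd (S : E → Finset (Fin n)) (I : Finset E) : Finset E :=
  {b | ∃ c ∈ I, Dep S b c}

theorem mem_nbhd {I : Finset E} {b : E} : b ∈ nbhd S I ↔ ∃ c ∈ I, Dep S b c := by
  simp [nbhd]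

noncomputable def nextLevels (S : E → Finset (Fin n)) (I : Finset E) : Finset (Finset E) :=
  {J | Indep S J ∧ J ⊆ nbhd S I}

theorem mem_nextLevels {I J : Finset E} : J ∈ nextLevels S I ↔ Indep S J ∧ J ⊆ nbhd S I := by
  simp [nextLevels]

theorem Q_eq_prod_mul_indepPoly (p : E → ℝ) {I : Finset E} (hI : Indep S I) :
    Q S p I = (∏ b ∈ I, p b) * indepPoly S p (univ \ (I ∪ nbhd S I)) := by
  rw [Q, indepPoly, mul_sum]
  refine sum_nbij' (· \ I) (I ∪ ·) ?_ ?_ ?_ ?_ ?_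
  · intro J hJ
    simp only [mem_filter, mem_univ, true_and] at hJ
    simp only [mem_filter, mem_powerset]
    refine ⟨fun b hb => ?_, hJ.2.mono sdiff_subset⟩
    obtain ⟨hbJ, hbI⟩ := mem_sdiff.1 hb
    simp only [mem_sdiff, mem_univ, mem_union, mem_nbhd, true_and, not_or, not_exists, not_and]
    exact ⟨hbI, fun c hc => hJ.2 b hbJ c (hJ.1 hc) (by rintro rfl; exact hbI hc)⟩
  · intro K hK
    simp only [mem_filter, mem_powerset, subset_sdiff, subset_univ, disjoint_union_right,
      true_and] at hK
    simp only [mem_filter, mem_univ, true_and]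
    refine ⟨subset_union_left, hI.union hK.2 fun b hb c hc hbc => ?_⟩
    exact disjoint_left.1 hK.1.2 hb (mem_nbhd.2 ⟨c, hc, hbc⟩)
  · intro J hJ
    simp only [mem_filter, mem_univ, true_and] at hJ
    exact union_sdiff_of_subset hJ.1
  · intro K hK
    simp only [mem_filter, mem_powerset, subset_sdiff, disjoint_union_right] at hK
    exact union_sdiff_cancel_left hK.1.2.1.symm
  · intro J hJ
    simp only [mem_filter, mem_univ, true_and] at hJ
    rw [card_sdiff_of_subset hJ.1, ← prod_sdiff hJ.1]
    ring

theorem sum_Q_nextLevels (p : E → ℝ) (I : Finset E) :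
    ∑ J ∈ nextLevels S I, Q S p J = indepPoly S p (univ \ nbhd S I) := by
  simp only [Q, nextLevels]
  rw [sum_comm' (t' := {J' | Indep S J'}) (s' := fun J' => (J' ∩ nbhd S I).powerset)
    (fun J J' => by
      simp only [mem_filter, mem_univ, true_and, mem_powerset, subset_inter_iff]
      exact ⟨fun ⟨⟨_, hJN⟩, hJJ', hJ'⟩ => ⟨⟨hJJ', hJN⟩, hJ'⟩,
        fun ⟨⟨hJJ', hJN⟩, hJ'⟩ => ⟨⟨hJ'.mono hJJ', hJN⟩, hJJ', hJ'⟩⟩)]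
  simp only [← sum_mul, sum_powerset_neg_one_pow_card_sub inter_subset_left, ite_mul, zero_mul,
    sum_ite, sum_const_zero, add_zero, indepPoly]
  refine sum_congr (ext fun K => ?_) fun _ _ => rfl
  simp only [mem_filter, mem_univ, true_and, mem_powerset, subset_sdiff, subset_univ,
    ← disjoint_iff_inter_eq_empty]
  tauto

theorem prod_mul_sum_Q_nextLevels_le {p : E → ℝ} (hp0 : ∀ b, 0 ≤ p b) (hp1 : ∀ b, p b ≤ 1)
    {I : Finset E} (hI : Indep S I) (hQI : 0 ≤ Q S p I) :
    (∏ b ∈ I, p b) * ∑ J ∈ nextLevels S I, Q S p J ≤ Q S p I := by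
  have hsplit : univ \ nbhd S I = (univ \ (I ∪ nbhd S I)) ∪ (I \ nbhd S I) := by
    ext b; by_cases b ∈ I <;> simp [*]
  have hisolated : ∀ b ∈ I \ nbhd S I, ∀ c, ¬ Dep S b c := fun b hb c hbc =>
    (mem_sdiff.1 hb).2 (mem_nbhd.2 ⟨b, (mem_sdiff.1 hb).1, hbc.self_left⟩)
  have hdisj : Disjoint (I \ nbhd S I) (univ \ (I ∪ nbhd S I)) :=
    disjoint_left.2 fun b hb hb' => (mem_sdiff.1 hb').2 (mem_union_left _ (mem_sdiff.1 hb).1)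
  rw [sum_Q_nextLevels, hsplit, indepPoly_union_of_isolated p hisolated hdisj, mul_left_comm,
    ← Q_eq_prod_mul_indepPoly p hI]
  exact mul_le_of_le_one_left hQI
    (prod_le_one (fun b _ => sub_nonneg.2 (hp1 b)) fun b _ => sub_le_self _ (hp0 b))

noncomputable def levelSum (S : E → Finset (Fin n)) (p : E → ℝ) : ℕ → Finset E → ℝ
  | 0, I => if I = ∅ then 1 else 0
  | k + 1, I => if I = ∅ then 1 else (∏ b ∈ I, p b) * ∑ J ∈ nextLevels S I, levelSum S p k J

theorem levelSum_le_Q_div {p : E → ℝ} (hp0 : ∀ b, 0 ≤ p b) (hp1 : ∀ b, p b ≤ 1)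
    (hSh : Shearer S p) (k : ℕ) {I : Finset E} (hI : Indep S I) :
    levelSum S p k I ≤ Q S p I / Q S p ∅ := by
  have hQ0 := hSh.1
  induction k generalizing I with
  | zero =>
    rw [levelSum]
    split_ifs with h
    · rw [h, div_self hQ0.ne']
    · exact div_nonneg (hSh.2 I hI) hQ0.le
  | succ k ih =>
    rw [levelSum]
    split_ifs with h
    · rw [h, div_self hQ0.ne']
    calc (∏ b ∈ I, p b) * ∑ J ∈ nextLevels S I, levelSum S p k J
        ≤ (∏ b ∈ I, p b) * ∑ J ∈ nextLevels S I, Q S p J / Q S p ∅ := by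
          gcongr with J hJ
          · exact prod_nonneg fun b _ => hp0 b
          · exact ih (mem_nextLevels.1 hJ).1
      _ = (∏ b ∈ I, p b) * (∑ J ∈ nextLevels S I, Q S p J) / Q S p ∅ := by
          rw [← sum_div, mul_div_assoc]
      _ ≤ Q S p I / Q S p ∅ := by
          gcongr
          exact prod_mul_sum_Q_nextLevels_le hp0 hp1 hI (hSh.2 I hI)

/-- Sequences `I :: I₁ :: … :: I_m` of nonempty sets with each set in `nextLevels` of the
previous one: `cons` with `J = ∅` closes a sequence, hence `nil` starts at `∅`. -/
inductive IsLevelSeq (S : E → Finset (Fin n)) : Finset E → List (Finset E) → Prop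
  | nil : IsLevelSeq S ∅ []
  | cons {I J : Finset E} {L : List (Finset E)} :
      I ≠ ∅ → J ∈ nextLevels S I → IsLevelSeq S J L → IsLevelSeq S I (I :: L)

namespace IsLevelSeq

variable {I : Finset E} {L : List (Finset E)}

theorem eq_nil_of_empty (h : IsLevelSeq S ∅ L) : L = [] := by
  cases h with
  | nil => rfl
  | cons hI => exact absurd rfl hI

theorem headD_eq (h : IsLevelSeq S I L) : L.headD ∅ = I := by
  cases h <;> rfl

theorem tail (h : IsLevelSeq S I L) (hI : I ≠ ∅) :
    L = I :: L.tail ∧ L.tail.headD ∅ ∈ nextLevels S I ∧ IsLevelSeq S (L.tail.headD ∅) L.tail := by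
  cases h with
  | nil => exact absurd rfl hI
  | cons _ hJ hL => exact ⟨rfl, hL.headD_eq ▸ hJ, hL.headD_eq ▸ hL⟩

theorem of_range_map {m : ℕ} {g : ℕ → Finset E} (hne : ∀ t ≤ m, g t ≠ ∅)
    (hnext : ∀ t < m, g (t + 1) ∈ nextLevels S (g t)) :
    IsLevelSeq S (g 0) ((List.range (m + 1)).map g) := by
  induction m generalizing g with
  | zero =>
    exact cons (hne 0 le_rfl) (mem_nextLevels.2 ⟨indep_empty, empty_subset _⟩) nil
  | succ m ih =>
    rw [List.range_succ_eq_map, List.map_cons, List.map_map]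
    exact cons (hne 0 (Nat.zero_le _)) (hnext 0 (Nat.succ_pos m))
      (ih (g := g ∘ Nat.succ) (fun t ht => hne (t + 1) (by omega))
        fun t ht => hnext (t + 1) (by omega))

end IsLevelSeq

variable {p : E → ℝ}

theorem levelSum_empty (k : ℕ) : levelSum S p k ∅ = 1 := by
  cases k <;> simp [levelSum]

theorem sum_seqWeight_le_levelSum_empty (hp0 : ∀ b, 0 ≤ p b) (k : ℕ)
    {𝔉 : Finset (List (Finset E))} (h𝔉 : ∀ L ∈ 𝔉, IsLevelSeq S ∅ L) :
    ∑ L ∈ 𝔉, seqWeight p L ≤ levelSum S p k ∅ :=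
  calc ∑ L ∈ 𝔉, seqWeight p L ≤ ∑ L ∈ {[]}, seqWeight p L :=
        sum_le_sum_of_subset_of_nonneg
          (fun L hL => mem_singleton.2 (h𝔉 L hL).eq_nil_of_empty)
          fun L _ _ => seqWeight_nonneg hp0 L
    _ = levelSum S p k ∅ := by simp [levelSum_empty, seqWeight]

theorem sum_seqWeight_eq_prod_mul_sum {I : Finset E} (hI : I ≠ ∅) {𝔉 : Finset (List (Finset E))}
    (h𝔉 : ∀ L ∈ 𝔉, IsLevelSeq S I L) :
    ∑ L ∈ 𝔉, seqWeight p L = (∏ b ∈ I, p b) *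
      ∑ J ∈ nextLevels S I, ∑ M ∈ 𝔉.image List.tail with M.headD ∅ = J, seqWeight p M := by
  have hcons : ∀ L ∈ 𝔉, L = I :: L.tail := fun L hL => ((h𝔉 L hL).tail hI).1
  rw [sum_fiberwise_of_maps_to, sum_image, mul_sum, sum_congr rfl]
  · exact fun L hL => by rw [← seqWeight_cons, ← hcons L hL]
  · exact fun L hL L' hL' h => by rw [hcons L hL, hcons L' hL', h]
  · rintro M hM
    obtain ⟨L, hL, rfl⟩ := mem_image.1 hM
    exact ((h𝔉 L hL).tail hI).2.1

theorem sum_seqWeight_le_levelSum (hp0 : ∀ b, 0 ≤ p b) (k : ℕ) {I : Finset E}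
    {𝔉 : Finset (List (Finset E))} (h𝔉 : ∀ L ∈ 𝔉, IsLevelSeq S I L ∧ L.length ≤ k) :
    ∑ L ∈ 𝔉, seqWeight p L ≤ levelSum S p k I := by
  induction k generalizing I 𝔉 with
  | zero =>
    obtain rfl | hI := eq_or_ne I ∅
    · exact sum_seqWeight_le_levelSum_empty hp0 0 fun L hL => (h𝔉 L hL).1
    have h𝔉e : 𝔉 = ∅ := eq_empty_of_forall_notMem fun L hL => by
      have hlen := (h𝔉 L hL).2
      rw [((h𝔉 L hL).1.tail hI).1] at hlen
      simp at hlen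
    simp [h𝔉e, levelSum, hI]
  | succ k ih =>
    obtain rfl | hI := eq_or_ne I ∅
    · exact sum_seqWeight_le_levelSum_empty hp0 (k + 1) fun L hL => (h𝔉 L hL).1
    rw [sum_seqWeight_eq_prod_mul_sum hI fun L hL => (h𝔉 L hL).1, levelSum, if_neg hI]
    gcongr with J hJ
    · exact prod_nonneg fun b _ => hp0 b
    refine ih fun M hM => ?_
    obtain ⟨hMtail, rfl⟩ := mem_filter.1 hM
    obtain ⟨L, hL, rfl⟩ := mem_image.1 hMtail
    obtain ⟨hcons, -, hseq⟩ := (h𝔉 L hL).1.tail hI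
    have hlen := (h𝔉 L hL).2
    rw [hcons] at hlen
    exact ⟨hseq, by simpa using hlen⟩

theorem sum_seqWeight_le_Q_div (hp0 : ∀ b, 0 ≤ p b) (hp1 : ∀ b, p b ≤ 1) (hSh : Shearer S p)
    {I : Finset E} (hI : Indep S I) {𝔉 : Finset (List (Finset E))}
    (h𝔉 : ∀ L ∈ 𝔉, IsLevelSeq S I L) : ∑ L ∈ 𝔉, seqWeight p L ≤ Q S p I / Q S p ∅ :=
  (sum_seqWeight_le_levelSum hp0 (𝔉.sup List.length) fun L hL => ⟨h𝔉 L hL, le_sup hL⟩).trans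
    (levelSum_le_Q_div hp0 hp1 hSh _ hI)

end Shearer

namespace WDag

variable {s : ℕ} {B : Fin s → E} (G : WDag n E S)

theorem wellFounded_flip_edge : WellFounded (flip G.edge) := by
  have : Std.Irrefl (TransGen (flip G.edge)) :=
    ⟨fun v hv => G.acyclic v (transGen_swap.1 hv)⟩
  have : IsTrans _ (TransGen (flip G.edge)) := ⟨fun _ _ _ => TransGen.trans⟩
  exact Subrelation.wf TransGen.single (Finite.wellFounded_of_trans_of_irrefl _)

variable {G} (hG : G.SinksAre B)

noncomputable def sinkOf : Fin s → Fin G.size := hG.choose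

theorem isSink_sinkOf (i : Fin s) : G.IsSink (sinkOf hG i) := (hG.choose_spec.1 i).1

theorem label_sinkOf (i : Fin s) : G.label (sinkOf hG i) = B i := (hG.choose_spec.1 i).2

theorem exists_sinkOf_eq {v : Fin G.size} (hv : G.IsSink v) : ∃ i, sinkOf hG i = v :=
  hG.choose_spec.2 v hv

theorem exists_reflTransGen_sinkOf (v : Fin G.size) :
    ∃ i, ReflTransGen G.edge v (sinkOf hG i) := by
  induction v using G.wellFounded_flip_edge.induction with
  | _ v ih =>
    by_cases hv : G.IsSink v
    · obtain ⟨i, rfl⟩ := exists_sinkOf_eq hG hv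
      exact ⟨i, .refl⟩
    · obtain ⟨w, hw⟩ := not_forall_not.1 hv
      obtain ⟨i, hi⟩ := ih w hw
      exact ⟨i, .head hw hi⟩

noncomputable def reachedSinks (v : Fin G.size) : Finset (Fin s) :=
  {i | ReflTransGen G.edge v (sinkOf hG i)}

noncomputable def part (v : Fin G.size) : Fin s :=
  (reachedSinks hG v).min' <| by
    obtain ⟨i, hi⟩ := exists_reflTransGen_sinkOf hG v
    exact ⟨i, by simpa [reachedSinks] using hi⟩

theorem reflTransGen_sinkOf_part (v : Fin G.size) :
    ReflTransGen G.edge v (sinkOf hG (part hG v)) :=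
  (mem_filter.1 (min'_mem (reachedSinks hG v) _)).2

theorem part_le_of_reflTransGen {v : Fin G.size} {i : Fin s}
    (h : ReflTransGen G.edge v (sinkOf hG i)) : part hG v ≤ i :=
  min'_le _ _ (by simpa [reachedSinks] using h)

theorem part_le_part_of_edge {v w : Fin G.size} (h : G.edge v w) : part hG v ≤ part hG w :=
  part_le_of_reflTransGen hG (.head h (reflTransGen_sinkOf_part hG w))

theorem exists_edge_part_eq {v : Fin G.size} (hv : ¬ G.IsSink v) :
    ∃ w, G.edge v w ∧ part hG w = part hG v := by
  rcases (reflTransGen_sinkOf_part hG v).cases_head with heq | ⟨w, hvw, hw⟩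
  · exact absurd (heq ▸ isSink_sinkOf hG _) hv
  · exact ⟨w, hvw, le_antisymm (part_le_of_reflTransGen hG hw) (part_le_part_of_edge hG hvw)⟩

theorem part_sinkOf (hB : Function.Injective B) (i : Fin s) : part hG (sinkOf hG i) = i := by
  rcases (reflTransGen_sinkOf_part hG (sinkOf hG i)).cases_head with heq | ⟨w, hw, -⟩
  · exact hB (by rw [← label_sinkOf hG (part hG _), ← heq, label_sinkOf])
  · exact absurd hw (isSink_sinkOf hG i w)

theorem eq_sinkOf_part (hB : Function.Injective B) {v : Fin G.size} (hv : G.IsSink v) :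
    v = sinkOf hG (part hG v) := by
  obtain ⟨i, rfl⟩ := exists_sinkOf_eq hG hv
  rw [part_sinkOf hG hB]

def PartEdge (v w : Fin G.size) : Prop := G.edge v w ∧ part hG w = part hG v

theorem wellFounded_flip_partEdge : WellFounded (flip (PartEdge hG)) :=
  Subrelation.wf (fun h => h.1) G.wellFounded_flip_edge

noncomputable def level : Fin G.size → ℕ := chainHeight _ (wellFounded_flip_partEdge hG)

theorem level_lt_of_edge {v w : Fin G.size} (h : G.edge v w) (hp : part hG w = part hG v) :
    level hG w < level hG v :=
  chainHeight_lt _ ⟨h, hp⟩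

theorem level_eq_zero_iff {v : Fin G.size} : level hG v = 0 ↔ G.IsSink v := by
  refine (chainHeight_eq_zero_iff _).trans ⟨fun h => ?_, fun h w hw => h w hw.1⟩
  by_contra hv
  obtain ⟨w, hw⟩ := exists_edge_part_eq hG hv
  exact h w hw

theorem part_eq_of_reflTransGen {v w : Fin G.size} (h : ReflTransGen (PartEdge hG) v w) :
    part hG w = part hG v := by
  induction h with
  | refl => rfl
  | tail _ huw ih => exact huw.2.trans ih

theorem exists_part_level_eq {v : Fin G.size} {j : ℕ} (hj : j ≤ level hG v) :
    ∃ w, part hG w = part hG v ∧ level hG w = j := by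
  obtain ⟨w, hvw, hw⟩ := exists_reflTransGen_chainHeight_eq _ hj
  exact ⟨w, part_eq_of_reflTransGen hG hvw, hw⟩

noncomputable def coord (v : Fin G.size) : Fin s × ℕ × E := (part hG v, level hG v, G.label v)

def CoordEdge (x y : Fin s × ℕ × E) : Prop :=
  Dep S x.2.2 y.2.2 ∧ (x.1 < y.1 ∨ x.1 = y.1 ∧ y.2.1 < x.2.1)

theorem edge_iff_coordEdge (v w : Fin G.size) :
    G.edge v w ↔ CoordEdge (S := S) (coord hG v) (coord hG w) := by
  refine ⟨fun h => ⟨G.edge_dep v w h, ?_⟩, fun ⟨hd, hvw⟩ => ?_⟩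
  · rcases (part_le_part_of_edge hG h).lt_or_eq with hlt | heq
    · exact .inl hlt
    · exact .inr ⟨heq, level_lt_of_edge hG h heq.symm⟩
  · have hne : v ≠ w := by rintro rfl; simp [coord] at hvw
    refine (G.dep_edge v w hne hd).resolve_right fun hwv => ?_
    have := part_le_part_of_edge hG hwv
    rcases hvw with hlt | ⟨heq, hlt⟩
    · exact absurd hlt this.not_gt
    · exact absurd hlt (level_lt_of_edge hG hwv heq).not_gt

theorem coord_injective (hB : Function.Injective B) : Function.Injective (coord hG) := by
  intro v w h
  simp only [coord, Prod.mk.injEq] at h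
  obtain ⟨hp, hl, hb⟩ := h
  by_contra hne
  by_cases hd : Dep S (G.label v) (G.label w)
  · rcases G.dep_edge v w hne hd with h | h
    · exact absurd hl (level_lt_of_edge hG h hp.symm).ne'
    · exact absurd hl (level_lt_of_edge hG h hp).ne
  · -- an event that does not depend on itself labels only sinks
    have hsink : ∀ u, G.label u = G.label v → G.IsSink u := fun u hu x hx =>
      hd (hb ▸ hu ▸ (G.edge_dep u x hx).self_left)
    exact hne (by rw [eq_sinkOf_part hG hB (hsink v rfl), eq_sinkOf_part hG hB (hsink w hb.symm),
      hp])

theorem iso_of_range_coord_eq {G' : WDag n E S} (hG' : G'.SinksAre B)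
    (hB : Function.Injective B) (h : Set.range (coord hG) = Set.range (coord hG')) :
    Iso G G' := by
  let e : Fin G.size ≃ Fin G'.size := (Equiv.ofInjective _ (coord_injective hG hB)).trans
    ((Equiv.setCongr h).trans (Equiv.ofInjective _ (coord_injective hG' hB)).symm)
  have he : ∀ v, coord hG' (e v) = coord hG v := fun v =>
    Equiv.apply_ofInjective_symm (coord_injective hG' hB) _
  refine ⟨e, fun v => congrArg (·.2.2) (he v), fun v w => ?_⟩
  rw [edge_iff_coordEdge hG', edge_iff_coordEdge hG, he, he]

noncomputable def cell (i : Fin s) (j : ℕ) : Finset E :=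
  ({v | part hG v = i ∧ level hG v = j} : Finset (Fin G.size)).image G.label

theorem mem_cell {i : Fin s} {j : ℕ} {b : E} :
    b ∈ cell hG i j ↔ (i, j, b) ∈ Set.range (coord hG) := by
  simp [cell, coord, and_assoc]

noncomputable def height (i : Fin s) : ℕ :=
  ({v | part hG v = i} : Finset (Fin G.size)).sup (level hG)

noncomputable def levelSeq (i : Fin s) : List (Finset E) :=
  (List.range (height hG i + 1)).map (cell hG i)

theorem level_le_height (v : Fin G.size) : level hG v ≤ height hG (part hG v) :=
  le_sup (f := level hG) (by simp)

theorem cell_eq_empty {i : Fin s} {j : ℕ} (hj : height hG i < j) : cell hG i j = ∅ := by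
  refine eq_empty_of_forall_notMem fun b hb => ?_
  obtain ⟨v, hv⟩ := (mem_cell hG).1 hb
  simp only [coord, Prod.mk.injEq] at hv
  have := level_le_height hG v
  rw [hv.1, hv.2.1] at this
  omega

theorem getD_levelSeq (i : Fin s) (j : ℕ) : (levelSeq hG i).getD j ∅ = cell hG i j := by
  rw [levelSeq, List.getD_eq_getElem?_getD, List.getElem?_map]
  by_cases hj : j < height hG i + 1
  · simp [List.getElem?_range hj]
  · simp [hj, cell_eq_empty hG (by omega : height hG i < j)]

theorem iso_of_levelSeq_eq {G' : WDag n E S} (hG' : G'.SinksAre B) (hB : Function.Injective B)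
    (h : ∀ i, levelSeq hG i = levelSeq hG' i) : Iso G G' :=
  iso_of_range_coord_eq hG hG' hB <| Set.ext fun ⟨i, j, b⟩ => by
    rw [← mem_cell, ← mem_cell, ← getD_levelSeq, ← getD_levelSeq, h]

theorem cell_zero (hB : Function.Injective B) (i : Fin s) : cell hG i 0 = {B i} := by
  ext b
  rw [mem_cell, mem_singleton]
  constructor
  · rintro ⟨v, hv⟩
    simp only [coord, Prod.mk.injEq] at hv
    obtain ⟨rfl, hv0, rfl⟩ := hv
    rw [eq_sinkOf_part hG hB ((level_eq_zero_iff hG).1 hv0), label_sinkOf, part_sinkOf hG hB]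
  · rintro rfl
    refine ⟨sinkOf hG i, ?_⟩
    simp [coord, part_sinkOf hG hB, (level_eq_zero_iff hG).2 (isSink_sinkOf hG i), label_sinkOf]

theorem cell_nonempty (hB : Function.Injective B) {i : Fin s} {j : ℕ} (hj : j ≤ height hG i) :
    (cell hG i j).Nonempty := by
  obtain ⟨v, hv, htop⟩ := exists_mem_eq_sup ({v | part hG v = i} : Finset (Fin G.size))
    ⟨sinkOf hG i, by simp [part_sinkOf hG hB]⟩ (level hG)
  obtain ⟨w, hw, rfl⟩ := exists_part_level_eq hG (htop ▸ hj : j ≤ level hG v)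
  exact ⟨G.label w, (mem_cell hG).2 ⟨w, by simp_all [coord]⟩⟩

theorem prod_cell (hB : Function.Injective B) (P : E → ℝ) (i : Fin s) (j : ℕ) :
    ∏ b ∈ cell hG i j, P b = ∏ v with part hG v = i ∧ level hG v = j, P (G.label v) :=
  prod_image fun v hv w hw hvw => coord_injective hG hB <| by
    simp only [coe_filter, mem_univ, true_and, Set.mem_ofPred_eq] at hv hw
    exact Prod.ext (hv.1.trans hw.1.symm) (Prod.ext (hv.2.trans hw.2.symm) hvw)

theorem seqWeight_levelSeq (P : E → ℝ) (i : Fin s) :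
    seqWeight P (levelSeq hG i) = ∏ j ∈ range (height hG i + 1), ∏ b ∈ cell hG i j, P b := by
  rw [seqWeight, levelSeq, List.map_map, prod_eq_multiset_prod]
  rfl

theorem wt_eq_prod_seqWeight (hB : Function.Injective B) (P : E → ℝ) :
    wt P G = ∏ i, seqWeight P (levelSeq hG i) := by
  rw [wt, ← prod_fiberwise univ (part hG)]
  refine prod_congr rfl fun i _ => ?_
  rw [seqWeight_levelSeq, ← prod_fiberwise_of_maps_to (g := level hG)
    fun v hv => mem_range_succ_iff.2 ((mem_filter.1 hv).2 ▸ level_le_height hG v)]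
  refine prod_congr rfl fun j _ => ?_
  rw [prod_cell hG hB, filter_filter]

theorem indep_cell (i : Fin s) (j : ℕ) : Indep S (cell hG i j) := by
  intro b hb c hc hbc hdep
  obtain ⟨v, hv⟩ := (mem_cell hG).1 hb
  obtain ⟨w, hw⟩ := (mem_cell hG).1 hc
  simp only [coord, Prod.mk.injEq] at hv hw
  have hvw : v ≠ w := by rintro rfl; exact hbc (hv.2.2.symm.trans hw.2.2)
  rw [← hv.2.2, ← hw.2.2] at hdep
  rcases G.dep_edge v w hvw hdep with h | h
  · exact (level_lt_of_edge hG h (hw.1.trans hv.1.symm)).ne (hw.2.1.trans hv.2.1.symm)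
  · exact (level_lt_of_edge hG h (hv.1.trans hw.1.symm)).ne (hv.2.1.trans hw.2.1.symm)

section Shearer

variable [Fintype E]

theorem cell_succ_mem_nextLevels (i : Fin s) (j : ℕ) :
    cell hG i (j + 1) ∈ nextLevels S (cell hG i j) := by
  refine mem_nextLevels.2 ⟨indep_cell hG i (j + 1), fun b hb => ?_⟩
  obtain ⟨v, hv⟩ := (mem_cell hG).1 hb
  simp only [coord, Prod.mk.injEq] at hv
  obtain ⟨hvi, hvj, rfl⟩ := hv
  obtain ⟨w, hvw, hwj⟩ := exists_chainHeight_eq_of_eq_add_one _ hvj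
  exact mem_nbhd.2 ⟨G.label w, (mem_cell hG).2 ⟨w, by simp [coord, hvw.2, hvi, hwj, level]⟩,
    G.edge_dep v w hvw.1⟩

theorem isLevelSeq_levelSeq (hB : Function.Injective B) (i : Fin s) :
    IsLevelSeq S {B i} (levelSeq hG i) :=
  cell_zero hG hB i ▸ IsLevelSeq.of_range_map
    (fun _ hj => (cell_nonempty hG hB hj).ne_empty) fun j _ => cell_succ_mem_nextLevels hG i j

end Shearer

end WDag

/-- Given distinct bad events B_1, …, B_s, the total weight of all
witness DAGs having exactly s sink nodes labeled B_1, …, B_s is at most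
Π_i μ(B_i). -/
theorem stmt6 {n : ℕ} {E : Type} [Fintype E] (S : E → Finset (Fin n)) (P : E → ℝ)
    (hP0 : ∀ b, 0 ≤ P b) (hP1 : ∀ b, P b ≤ 1)
    (hSh : Shearer S P) (s : ℕ) (B : Fin s → E) (hBinj : Function.Injective B) :
    ∑' c : {c : WDag.WClass n E S //
        ∃ G : WDag n E S, Quotient.mk (WDag.wdSetoid n E S) G = c ∧ WDag.SinksAre G B},
      ENNReal.ofReal (WDag.cwt P c.1)
      ≤ ENNReal.ofReal (∏ j : Fin s, Q S P {B j} / Q S P ∅) := by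
  refine ENNReal.summable.tsum_le_of_sum_le fun F => ?_
  choose G hGc hGB using fun c : {c : WDag.WClass n E S //
    ∃ G : WDag n E S, Quotient.mk (WDag.wdSetoid n E S) G = c ∧ WDag.SinksAre G B} => c.2
  have hwt : ∀ c, WDag.cwt P c.1 = ∏ i, seqWeight P (WDag.levelSeq (hGB c) i) := fun c => by
    rw [← hGc c, ← WDag.wt_eq_prod_seqWeight (hGB c) hBinj]
    rfl
  have hinj : Set.InjOn (fun c => WDag.levelSeq (hGB c)) F := fun c _ c' _ h =>
    Subtype.ext <| (hGc c).symm.trans <| (Quotient.sound <|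
      WDag.iso_of_levelSeq_eq (hGB c) (hGB c') hBinj (congrFun h)).trans (hGc c')
  simp only [hwt]
  rw [← ENNReal.ofReal_sum_of_nonneg fun c _ => prod_nonneg fun i _ => seqWeight_nonneg hP0 _]
  refine ENNReal.ofReal_le_ofReal <| (sum_prod_le_prod_sum_image hinj
    fun _ => seqWeight_nonneg hP0).trans <| prod_le_prod
    (fun i _ => sum_nonneg fun L _ => seqWeight_nonneg hP0 L) fun i _ => ?_
  refine sum_seqWeight_le_Q_div hP0 hP1 hSh (indep_singleton (B i)) fun L hL => ?_
  obtain ⟨c, -, rfl⟩ := mem_image.1 hL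
  exact WDag.isLevelSeq_levelSeq (hGB c) hBinj i

end LLL
end

section
/- Suppose H_1 and H_2 are both prefixes of a witness DAG G. Then H_1 is consistent with H_2. -/
open scoped Classical

namespace LLL

/-- A finite directed graph with nodes labeled by bad events. -/
structure LGraph (E : Type) where
  V : Type
  fin : Fintype V
  label : V → E
  edge : V → V → Prop

attribute [instance] LGraph.fin

namespace LGraph

variable {n : ℕ} {E : Type}

/-- A labeled digraph is a witness DAG: it is acyclic, any two nodes with
dependent labels are joined by an edge (in one direction), and nodes with
non-dependent labels have no edge. -/
def IsWDag (S : E → Finset (Fin n)) (G : LGraph E) : Prop :=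
  (∀ v, ¬ Relation.TransGen G.edge v v) ∧
  (∀ v w, G.edge v w → Dep S (G.label v) (G.label w)) ∧
  (∀ v w : G.V, v ≠ w → Dep S (G.label v) (G.label w) → G.edge v w ∨ G.edge w v)

/-- A node is a sink if it has no outgoing edge. -/
def IsSink (G : LGraph E) (v : G.V) : Prop := ∀ w, ¬ G.edge v w

/-- Induced subgraph on a set of vertices. -/
noncomputable def induce (G : LGraph E) (s : Set G.V) : LGraph E where
  V := s
  fin := (Set.toFinite s).fintype
  label := fun v => G.label v.1
  edge := fun v w => G.edge v.1 w.1

/-- The set of vertices having a directed path to at least one vertex of `s`. -/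
def ReachSet (G : LGraph E) (s : Set G.V) : Set G.V :=
  {u | ∃ v ∈ s, Relation.ReflTransGen G.edge u v}

/-- Isomorphism of labeled digraphs. -/
def LIso (G H : LGraph E) : Prop :=
  ∃ e : G.V ≃ H.V, (∀ v, H.label (e v) = G.label v) ∧
    ∀ v w, H.edge (e v) (e w) ↔ G.edge v w

/-- `G` is a prefix of `H`: `G` is (isomorphic to) the subgraph of `H` induced
on all vertices having a path to a given set of vertices. -/
def IsPrefix (G H : LGraph E) : Prop :=
  ∃ s : Set H.V, LIso G (H.induce (H.ReachSet s))

/-- The position of node v among the nodes with the same label (the number of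
same-labeled nodes strictly preceding it). -/
noncomputable def pos (G : LGraph E) (v : G.V) : ℕ :=
  (Finset.univ.filter fun u => G.label u = G.label v ∧ Relation.TransGen G.edge u v).card

/-- The node v has extended label bk = (B, k). -/
def HasExt (G : LGraph E) (v : G.V) (bk : E × ℕ) : Prop :=
  G.label v = bk.1 ∧ G.pos v = bk.2

/-- The extended label bk = (B, k) occurs in G. -/
def Occurs (G : LGraph E) (bk : E × ℕ) : Prop := ∃ v, G.HasExt v bk

/-- The number of nodes strictly preceding `v` whose label involves variable `i`. -/
noncomputable def vcount (S : E → Finset (Fin n)) (G : LGraph E) (i : Fin n) (v : G.V) : ℕ :=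
  (Finset.univ.filter fun u => i ∈ S (G.label u) ∧ Relation.TransGen G.edge u v).card

/-- Position k of the path G[i] of variable i is occupied by a node labeled b. -/
def VOccurs (S : E → Finset (Fin n)) (G : LGraph E) (i : Fin n) (k : ℕ) (b : E) : Prop :=
  ∃ v, i ∈ S (G.label v) ∧ vcount S G i v = k ∧ G.label v = b

/-- G[i] is an initial segment of G'[i] (as labeled ordered graphs). -/
def InitSeg (S : E → Finset (Fin n)) (G G' : LGraph E) (i : Fin n) : Prop :=
  ∀ k b, VOccurs S G i k b → VOccurs S G' i k b

/-- Witness DAGs G, G' are consistent: for each variable i, either G[i] is an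
initial segment of G'[i] or vice versa. -/
def Consistent (S : E → Finset (Fin n)) (G G' : LGraph E) : Prop :=
  ∀ i : Fin n, InitSeg S G G' i ∨ InitSeg S G' G i

/-- The merge G ∨ G' of two witness DAGs: one node for each extended label
occurring in G or G', with an edge between two extended labels iff G or G' has
an edge between nodes with those extended labels. -/
noncomputable def merge (G G' : LGraph E) : LGraph E where
  V := {bk : E × ℕ // G.Occurs bk ∨ G'.Occurs bk}
  fin := by
    have hsub : {bk : E × ℕ | G.Occurs bk ∨ G'.Occurs bk} ⊆
        (Set.range fun v : G.V => (G.label v, G.pos v)) ∪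
        (Set.range fun v : G'.V => (G'.label v, G'.pos v)) := by
      rintro bk (⟨v, hv1, hv2⟩ | ⟨v, hv1, hv2⟩)
      · exact Or.inl ⟨v, by simp [hv1, hv2]⟩
      · exact Or.inr ⟨v, by simp [hv1, hv2]⟩
    exact (((Set.finite_range _).union (Set.finite_range _)).subset hsub).fintype
  label := fun bk => bk.1.1
  edge := fun a b =>
    (∃ v w, G.HasExt v a.1 ∧ G.HasExt w b.1 ∧ G.edge v w) ∨
    (∃ v w, G'.HasExt v a.1 ∧ G'.HasExt w b.1 ∧ G'.edge v w)

/-- A witness DAG G is compatible with a resampling table R: for every node v,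
the label of v is true on the configuration read off from R. -/
def Compat {Vl : Type} (S : E → Finset (Fin n)) (Ev : E → (Fin n → Vl) → Prop)
    (G : LGraph E) (R : Fin n → ℕ → Vl) : Prop :=
  ∀ v : G.V, Ev (G.label v) (fun i => R i (vcount S G i v))

/-- A witness DAG is collectible to b if b is dependent with the labels of all
its sink nodes; it is collectible if it is collectible to some bad event. -/
def Collectible (S : E → Finset (Fin n)) (G : LGraph E) : Prop :=
  ∃ b : E, ∀ v, G.IsSink v → Dep S b (G.label v)

end LGraph


/-! The nodes of a witness DAG whose labels involve a fixed variable `i` form a chain, so of two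
predecessor-closed vertex sets one contains all `i`-nodes of the other. A prefix is the subgraph
induced on such a set, and inducing on a predecessor-closed set changes neither the strict
predecessors of a node nor, therefore, the positions along each path `G[i]`. -/

namespace LGraph

open Relation

variable {n : ℕ} {E : Type}

def IsDownClosed (G : LGraph E) (T : Set G.V) : Prop :=
  ∀ ⦃u v⦄, G.edge u v → v ∈ T → u ∈ T

lemma isDownClosed_reachSet (G : LGraph E) (s : Set G.V) : G.IsDownClosed (G.ReachSet s) := by
  rintro u v huv ⟨t, hts, hvt⟩
  exact ⟨t, hts, hvt.head huv⟩

lemma transGen_equiv_iff {G H : LGraph E} (e : G.V ≃ H.V)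
    (he : ∀ v w, H.edge (e v) (e w) ↔ G.edge v w) {u v : G.V} :
    TransGen H.edge (e u) (e v) ↔ TransGen G.edge u v := by
  refine ⟨fun h => ?_, TransGen.lift e (fun a b => (he a b).2) u v⟩
  simpa [Function.onFun] using
    TransGen.lift e.symm (fun a b hab => (he _ _).1 (by simpa using hab)) _ _ h

lemma vcount_equiv (S : E → Finset (Fin n)) {G H : LGraph E} (e : G.V ≃ H.V)
    (hl : ∀ v, H.label (e v) = G.label v) (he : ∀ v w, H.edge (e v) (e w) ↔ G.edge v w)
    (i : Fin n) (v : G.V) : H.vcount S i (e v) = G.vcount S i v := by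
  refine (Finset.card_equiv e fun u => ?_).symm
  simp [hl, transGen_equiv_iff e he]

lemma LIso.vOccurs_iff {S : E → Finset (Fin n)} {H K : LGraph E} (h : LIso H K) {i : Fin n}
    {k : ℕ} {b : E} : H.VOccurs S i k b ↔ K.VOccurs S i k b := by
  obtain ⟨e, hl, he⟩ := h
  exact e.exists_congr fun v => by simp [hl, vcount_equiv S e hl he]

lemma initSeg_congr {S : E → Finset (Fin n)} {H₁ H₂ K₁ K₂ : LGraph E} (h₁ : LIso H₁ K₁)
    (h₂ : LIso H₂ K₂) (i : Fin n) : InitSeg S H₁ H₂ i ↔ InitSeg S K₁ K₂ i := by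
  simp only [InitSeg, h₁.vOccurs_iff, h₂.vOccurs_iff]

section DownClosed

variable {G : LGraph E} {T : Set G.V}

lemma transGen_induce_iff (hT : G.IsDownClosed T) {u v : G.V} (hu : u ∈ T) (hv : v ∈ T) :
    TransGen (G.induce T).edge ⟨u, hu⟩ ⟨v, hv⟩ ↔ TransGen G.edge u v := by
  refine ⟨TransGen.lift (fun w : (G.induce T).V => w.1) (fun _ _ h => h) _ _, fun h => ?_⟩
  induction h with
  | single h => exact .single h
  | tail _ hbc ih => exact (ih (hT hbc hv)).tail hbc

lemma vcount_induce (S : E → Finset (Fin n)) (hT : G.IsDownClosed T) (i : Fin n) (v : T) :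
    (G.induce T).vcount S i v = G.vcount S i v := by
  refine Finset.card_nbij Subtype.val ?_ Subtype.val_injective.injOn ?_
  · rintro ⟨u, hu⟩ h
    simp only [Finset.coe_filter, Finset.mem_univ, true_and] at h ⊢
    exact ⟨h.1, (transGen_induce_iff hT hu v.2).1 h.2⟩
  · rintro u h
    simp only [Finset.coe_filter, Finset.mem_univ, true_and] at h
    have hu : u ∈ T := h.2.closed' (fun huv => hT huv) v.2
    refine ⟨⟨u, hu⟩, ?_, rfl⟩
    simp only [Finset.coe_filter, Finset.mem_univ, true_and]
    exact ⟨h.1, (transGen_induce_iff hT hu v.2).2 h.2⟩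

lemma vOccurs_induce_iff (S : E → Finset (Fin n)) (hT : G.IsDownClosed T) {i : Fin n}
    {k : ℕ} {b : E} :
    (G.induce T).VOccurs S i k b ↔
      ∃ v ∈ T, i ∈ S (G.label v) ∧ G.vcount S i v = k ∧ G.label v = b := by
  constructor
  · rintro ⟨v, hvi, hvk, hvb⟩
    exact ⟨v.1, v.2, hvi, (vcount_induce S hT i v).symm.trans hvk, hvb⟩
  · rintro ⟨v, hv, hvi, hvk, hvb⟩
    exact ⟨⟨v, hv⟩, hvi, (vcount_induce S hT i ⟨v, hv⟩).trans hvk, hvb⟩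

lemma initSeg_induce_of_subset (S : E → Finset (Fin n)) {T' : Set G.V} (hT : G.IsDownClosed T)
    (hT' : G.IsDownClosed T') {i : Fin n} (h : {v ∈ T | i ∈ S (G.label v)} ⊆ T') :
    InitSeg S (G.induce T) (G.induce T') i := by
  intro k b hkb
  obtain ⟨v, hv, hvi, hvk, hvb⟩ := (vOccurs_induce_iff S hT).1 hkb
  exact (vOccurs_induce_iff S hT').2 ⟨v, h ⟨hv, hvi⟩, hvi, hvk, hvb⟩

end DownClosed

lemma IsWDag.varNodes_subset_or_subset {S : E → Finset (Fin n)} {G : LGraph E}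
    (hG : G.IsWDag S) {T₁ T₂ : Set G.V} (h₁ : G.IsDownClosed T₁) (h₂ : G.IsDownClosed T₂)
    (i : Fin n) :
    {v ∈ T₁ | i ∈ S (G.label v)} ⊆ T₂ ∨ {v ∈ T₂ | i ∈ S (G.label v)} ⊆ T₁ := by
  refine or_iff_not_imp_left.2 fun h => ?_
  obtain ⟨v, ⟨hv₁, hvi⟩, hv₂⟩ := Set.not_subset.1 h
  rintro u ⟨hu₂, hui⟩
  have hne : u ≠ v := by rintro rfl; exact hv₂ hu₂
  rcases hG.2.2 u v hne ⟨i, Finset.mem_inter.2 ⟨hui, hvi⟩⟩ with huv | hvu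
  · exact h₁ huv hv₁
  · exact absurd (h₂ hvu hu₂) hv₂

lemma IsWDag.consistent_induce {S : E → Finset (Fin n)} {G : LGraph E} (hG : G.IsWDag S)
    {T₁ T₂ : Set G.V} (h₁ : G.IsDownClosed T₁) (h₂ : G.IsDownClosed T₂) :
    Consistent S (G.induce T₁) (G.induce T₂) := fun i =>
  (hG.varNodes_subset_or_subset h₁ h₂ i).imp (initSeg_induce_of_subset S h₁ h₂)
    (initSeg_induce_of_subset S h₂ h₁)

end LGraph

/-- If H₁ and H₂ are both prefixes of a witness DAG G, then H₁ is
consistent with H₂. -/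
theorem stmt13 {n : ℕ} {E : Type} (S : E → Finset (Fin n))
    (G H₁ H₂ : LGraph E) (hG : G.IsWDag S)
    (h1 : H₁.IsPrefix G) (h2 : H₂.IsPrefix G) :
    LGraph.Consistent S H₁ H₂ := by
  obtain ⟨s₁, e₁⟩ := h1
  obtain ⟨s₂, e₂⟩ := h2
  intro i
  rw [LGraph.initSeg_congr e₁ e₂, LGraph.initSeg_congr e₂ e₁]
  exact hG.consistent_induce (G.isDownClosed_reachSet s₁) (G.isDownClosed_reachSet s₂) i

end LLL
end

section
/- Let G_1, G_2 be consistent witness DAGs and let R be a resampling table. Then the merge G_1 ∨ G_2 is compatible with R if and only if both G_1 and G_2 are compatible with R. -/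
/-!
In a witness DAG the nodes of `G[i]` form a chain, numbered `0, 1, 2, …` by `vcount S G i`, and
the position of a node of `G[i]` among the nodes with its label is the number of earlier
occurrences of that label in `G[i]`. Consistency makes `G₁[i]` and `G₂[i]` agree on their common
part, so nodes of `G₁` and of `G₂` with the same label `B` have the same extended label iff,
for any `i ∈ S B`, they sit at the same place in `G₁[i]` and `G₂[i]`. Hence an edge of
`G₁ ∨ G₂` into the extended label of a node `v` of `G₁` comes from a node of `G₁` with a path
to `v`: the embedding of `G₁` into the merge reflects paths, so it preserves the counts
`y_{v,i}`, and likewise for `G₂`. As every node of the merge comes from `G₁` or `G₂`, the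
compatibility conditions coincide.
-/

open scoped Classical

namespace LLL

namespace LGraph

open Relation Finset

variable {n : ℕ} {E : Type} {S : E → Finset (Fin n)}

theorem card_filter_transGen_lt {G : LGraph E} (hacyc : ∀ v, ¬ TransGen G.edge v v)
    {P : G.V → Prop} [DecidablePred P] {u v : G.V} (hu : P u) (huv : TransGen G.edge u v) :
    #{w | P w ∧ TransGen G.edge w u} < #{w | P w ∧ TransGen G.edge w v} := by
  refine card_lt_card ⟨fun w hw => ?_, fun hsub => ?_⟩
  · simp only [mem_filter, mem_univ, true_and] at hw ⊢
    exact ⟨hw.1, hw.2.trans huv⟩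
  · have := @hsub u (by simp only [mem_filter, mem_univ, true_and]; exact ⟨hu, huv⟩)
    simp only [mem_filter, mem_univ, true_and] at this
    exact hacyc u this.2

namespace IsWDag

variable {G : LGraph E} {i : Fin n} {u v : G.V}

theorem pos_lt (h : G.IsWDag S) (hl : G.label u = G.label v) (huv : TransGen G.edge u v) :
    G.pos u < G.pos v := by
  unfold pos
  rw [hl]
  exact card_filter_transGen_lt h.1 (P := fun w => G.label w = G.label v) hl huv

theorem vcount_lt (h : G.IsWDag S) (hu : i ∈ S (G.label u)) (huv : TransGen G.edge u v) :
    vcount S G i u < vcount S G i v :=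
  card_filter_transGen_lt h.1 (P := fun w => i ∈ S (G.label w)) hu huv

theorem transGen_or_transGen (h : G.IsWDag S) (hu : i ∈ S (G.label u))
    (hv : i ∈ S (G.label v)) (hne : u ≠ v) :
    TransGen G.edge u v ∨ TransGen G.edge v u :=
  (h.2.2 u v hne ⟨i, mem_inter.2 ⟨hu, hv⟩⟩).imp .single .single

theorem injOn_vcount (h : G.IsWDag S) :
    Set.InjOn (vcount S G i) {w | i ∈ S (G.label w)} := by
  intro u hu v hv huv
  by_contra hne
  rcases h.transGen_or_transGen hu hv hne with h' | h'
  · exact (h.vcount_lt hu h').ne huv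
  · exact (h.vcount_lt hv h').ne huv.symm

theorem injOn_label_pos (h : G.IsWDag S) :
    Set.InjOn (fun w => (G.label w, G.pos w)) {w | i ∈ S (G.label w)} := by
  intro u hu v hv huv
  obtain ⟨hl, hp⟩ := Prod.mk.inj huv
  by_contra hne
  rcases h.transGen_or_transGen hu hv hne with h' | h'
  · exact (h.pos_lt hl h').ne hp
  · exact (h.pos_lt hl.symm h').ne hp.symm

theorem transGen_of_vcount_lt (h : G.IsWDag S) (hu : i ∈ S (G.label u))
    (hv : i ∈ S (G.label v)) (hlt : vcount S G i u < vcount S G i v) :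
    TransGen G.edge u v := by
  refine (h.transGen_or_transGen hu hv (by rintro rfl; exact hlt.false)).resolve_right ?_
  exact fun hvu => (h.vcount_lt hv hvu).asymm hlt

theorem exists_vcount_eq (h : G.IsWDag S) {k : ℕ} (hk : k < vcount S G i v) :
    ∃ w, i ∈ S (G.label w) ∧ vcount S G i w = k := by
  set T : Finset G.V := {w | i ∈ S (G.label w) ∧ TransGen G.edge w v}
  have hmaps : Set.MapsTo (vcount S G i) T (range (vcount S G i v)) := fun w hw => by
    simp only [T, mem_coe, mem_filter, mem_univ, true_and] at hw
    exact mem_range.2 (h.vcount_lt hw.1 hw.2)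
  have hinj : Set.InjOn (vcount S G i) T :=
    h.injOn_vcount.mono fun w hw => by
      simp only [T, mem_coe, mem_filter, mem_univ, true_and] at hw
      exact hw.1
  obtain ⟨w, hw, rfl⟩ := surjOn_of_injOn_of_card_le _ hmaps hinj
    (card_range _).le (mem_range.2 hk)
  simp only [T, mem_coe, mem_filter, mem_univ, true_and] at hw
  exact ⟨w, hw.1, rfl⟩

theorem label_eq_of_vOccurs (h : G.IsWDag S) {k : ℕ} {b b' : E}
    (hb : VOccurs S G i k b) (hb' : VOccurs S G i k b') : b = b' := by
  obtain ⟨v, hv, rfl, rfl⟩ := hb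
  obtain ⟨v', hv', hvv', rfl⟩ := hb'
  rw [h.injOn_vcount hv hv' hvv'.symm]

theorem pos_eq_card_vOccurs (h : G.IsWDag S) (hv : i ∈ S (G.label v)) :
    G.pos v = #{k ∈ range (vcount S G i v) | VOccurs S G i k (G.label v)} := by
  refine card_nbij (vcount S G i) (fun u hu => ?_) (fun u hu w hw huw => ?_) (fun k hk => ?_)
  · simp only [mem_coe, mem_filter, mem_univ, true_and, mem_range] at hu ⊢
    have hiu : i ∈ S (G.label u) := hu.1 ▸ hv
    exact ⟨h.vcount_lt hiu hu.2, u, hiu, rfl, hu.1⟩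
  · simp only [mem_coe, mem_filter, mem_univ, true_and] at hu hw
    exact h.injOn_vcount (hu.1 ▸ hv : i ∈ S (G.label u)) (hw.1 ▸ hv : i ∈ S (G.label w)) huw
  · simp only [mem_coe, mem_filter, mem_range] at hk
    obtain ⟨hk, w, hw, rfl, hwl⟩ := hk
    exact ⟨w, by simpa only [mem_coe, mem_filter, mem_univ, true_and] using
      ⟨hwl, h.transGen_of_vcount_lt hw hv hk⟩, rfl⟩

end IsWDag

theorem Consistent.symm {G G' : LGraph E} (hcons : Consistent S G G') : Consistent S G' G :=
  fun i => (hcons i).symm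

section TwoDags

variable {G G' : LGraph E} {i : Fin n} {v : G.V} {y : G'.V}

theorem vOccurs_iff_of_initSeg (h : G.IsWDag S) (h' : G'.IsWDag S) (hseg : InitSeg S G G' i)
    {k : ℕ} (hk : k < vcount S G i v) {b : E} : VOccurs S G i k b ↔ VOccurs S G' i k b := by
  refine ⟨hseg k b, fun hb => ?_⟩
  obtain ⟨w, hw, hwk⟩ := h.exists_vcount_eq hk
  exact ⟨w, hw, hwk, h'.label_eq_of_vOccurs (hseg k _ ⟨w, hw, hwk, rfl⟩) hb⟩

theorem label_eq_of_vOccurs_of_consistent (h : G.IsWDag S) (h' : G'.IsWDag S)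
    (hcons : Consistent S G G') {k : ℕ} {b b' : E}
    (hb : VOccurs S G i k b) (hb' : VOccurs S G' i k b') : b = b' := by
  rcases hcons i with hseg | hseg
  · exact h'.label_eq_of_vOccurs (hseg k b hb) hb'
  · exact h.label_eq_of_vOccurs hb (hseg k b' hb')

theorem pos_eq_of_vcount_eq (h : G.IsWDag S) (h' : G'.IsWDag S) (hcons : Consistent S G G')
    (hl : G'.label y = G.label v) (hv : i ∈ S (G.label v))
    (hvy : vcount S G i v = vcount S G' i y) : G.pos v = G'.pos y := by
  rw [h.pos_eq_card_vOccurs hv, h'.pos_eq_card_vOccurs (hl ▸ hv : i ∈ S (G'.label y)), hl, hvy]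
  refine congrArg card (filter_congr fun k hk => ?_)
  rcases hcons i with hseg | hseg
  · exact vOccurs_iff_of_initSeg h h' hseg (hvy ▸ mem_range.1 hk)
  · exact (vOccurs_iff_of_initSeg h' h hseg (mem_range.1 hk)).symm

theorem vcount_eq_of_pos_eq_of_initSeg (h : G.IsWDag S) (h' : G'.IsWDag S)
    (hcons : Consistent S G G') (hseg : InitSeg S G G' i)
    (hl : G'.label y = G.label v) (hp : G'.pos y = G.pos v) (hv : i ∈ S (G.label v)) :
    vcount S G i v = vcount S G' i y := by
  obtain ⟨y', hy', hy'v, hy'l⟩ := hseg _ _ ⟨v, hv, rfl, rfl⟩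
  have hp' : G.pos v = G'.pos y' := pos_eq_of_vcount_eq h h' hcons hy'l hv hy'v.symm
  have hy'y : y' = y :=
    h'.injOn_label_pos hy' (hl ▸ hv : i ∈ S (G'.label y)) (by simp only [hy'l, hl, hp, hp'])
  rw [← hy'y, hy'v]

theorem vcount_eq_of_pos_eq (h : G.IsWDag S) (h' : G'.IsWDag S) (hcons : Consistent S G G')
    (hl : G'.label y = G.label v) (hp : G'.pos y = G.pos v) (hv : i ∈ S (G.label v)) :
    vcount S G i v = vcount S G' i y := by
  rcases hcons i with hseg | hseg
  · exact vcount_eq_of_pos_eq_of_initSeg h h' hcons hseg hl hp hv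
  · exact (vcount_eq_of_pos_eq_of_initSeg h' h hcons.symm hseg hl.symm hp.symm
      (hl ▸ hv)).symm

def ExtEdge (G : LGraph E) (a b : E × ℕ) : Prop :=
  ∃ v w, G.HasExt v a ∧ G.HasExt w b ∧ G.edge v w

theorem exists_transGen_of_extEdge (h : G.IsWDag S) (h' : G'.IsWDag S)
    (hcons : Consistent S G G') {a c : E × ℕ} (hv : G.HasExt v a)
    (hca : ExtEdge G c a ∨ ExtEdge G' c a) : ∃ w, G.HasExt w c ∧ TransGen G.edge w v := by
  rcases hca with ⟨x, y, hx, hy, hxy⟩ | ⟨x, y, hx, hy, hxy⟩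
  · obtain ⟨i, hi⟩ := h.2.1 x y hxy
    have hl : G.label y = G.label v := hy.1.trans hv.1.symm
    have hiy : i ∈ S (G.label y) := (mem_inter.1 hi).2
    have hyv : y = v :=
      h.injOn_label_pos hiy (hl ▸ hiy : i ∈ S (G.label v)) (Prod.ext hl (hy.2.trans hv.2.symm))
    exact ⟨x, hx, hyv ▸ .single hxy⟩
  · obtain ⟨i, hi⟩ := h'.2.1 x y hxy
    obtain ⟨hix, hiy⟩ := mem_inter.1 hi
    have hl : G'.label y = G.label v := hy.1.trans hv.1.symm
    have hiv : i ∈ S (G.label v) := hl ▸ hiy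
    have hvy : vcount S G i v = vcount S G' i y :=
      vcount_eq_of_pos_eq h h' hcons hl (hy.2.trans hv.2.symm) hiv
    have hxv : vcount S G' i x < vcount S G i v := hvy ▸ h'.vcount_lt hix (.single hxy)
    obtain ⟨w, hiw, hwx⟩ := h.exists_vcount_eq hxv
    have hwl : G.label w = G'.label x :=
      label_eq_of_vOccurs_of_consistent h h' hcons ⟨w, hiw, hwx, rfl⟩ ⟨x, hix, rfl, rfl⟩
    have hwp : G.pos w = G'.pos x := pos_eq_of_vcount_eq h h' hcons hwl.symm hiw hwx
    exact ⟨w, ⟨hwl.trans hx.1, hwp.trans hx.2⟩,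
      h.transGen_of_vcount_lt hiw hiv (hwx ▸ hxv)⟩

theorem exists_transGen_of_transGen_extEdge (h : G.IsWDag S) (h' : G'.IsWDag S)
    (hcons : Consistent S G G') {a c : E × ℕ}
    (hca : TransGen (fun a b => ExtEdge G a b ∨ ExtEdge G' a b) c a) (hv : G.HasExt v a) :
    ∃ w, G.HasExt w c ∧ TransGen G.edge w v := by
  induction hca using TransGen.head_induction_on generalizing v with
  | single hca => exact exists_transGen_of_extEdge h h' hcons hv hca
  | head hcb _ ih =>
    obtain ⟨u, hu, huv⟩ := ih hv
    obtain ⟨w, hw, hwu⟩ := exists_transGen_of_extEdge h h' hcons hu hcb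
    exact ⟨w, hw, hwu.trans huv⟩

end TwoDags

theorem vcount_map_eq {G M : LGraph E} {i : Fin n} (f : G.V → M.V)
    (hlabel : ∀ v, M.label (f v) = G.label v) (hinj : Set.InjOn f {w | i ∈ S (G.label w)})
    (hedge : ∀ v w, G.edge v w → M.edge (f v) (f w))
    (hreflect : ∀ u v, TransGen M.edge u (f v) → ∃ w, f w = u ∧ TransGen G.edge w v)
    (v : G.V) : vcount S M i (f v) = vcount S G i v := by
  symm
  refine card_nbij f (fun w hw => ?_) (fun w hw w' hw' hww' => ?_) (fun u hu => ?_)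
  · simp only [mem_coe, mem_filter, mem_univ, true_and, hlabel] at hw ⊢
    exact ⟨hw.1, TransGen.lift f hedge _ _ hw.2⟩
  · simp only [mem_coe, mem_filter, mem_univ, true_and] at hw hw'
    exact hinj hw.1 hw'.1 hww'
  · simp only [mem_coe, mem_filter, mem_univ, true_and] at hu
    obtain ⟨w, rfl, hwv⟩ := hreflect u v hu.2
    exact ⟨w, by simpa only [mem_coe, mem_filter, mem_univ, true_and, ← hlabel w]
      using ⟨hu.1, hwv⟩, rfl⟩

section Merge

variable {G₁ G₂ : LGraph E}

noncomputable def mergeInl (G₂ : LGraph E) (v : G₁.V) : (G₁.merge G₂).V :=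
  ⟨(G₁.label v, G₁.pos v), .inl ⟨v, rfl, rfl⟩⟩

noncomputable def mergeInr (G₁ : LGraph E) (v : G₂.V) : (G₁.merge G₂).V :=
  ⟨(G₂.label v, G₂.pos v), .inr ⟨v, rfl, rfl⟩⟩

@[simp]
theorem label_mergeInl (v : G₁.V) : (G₁.merge G₂).label (mergeInl G₂ v) = G₁.label v :=
  rfl

@[simp]
theorem label_mergeInr (v : G₂.V) : (G₁.merge G₂).label (mergeInr G₁ v) = G₂.label v :=
  rfl

theorem exists_mergeInl_or_mergeInr (u : (G₁.merge G₂).V) :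
    (∃ v, mergeInl G₂ v = u) ∨ ∃ v, mergeInr G₁ v = u := by
  rcases u with ⟨c, ⟨v, hv⟩ | ⟨v, hv⟩⟩
  · exact .inl ⟨v, Subtype.ext (Prod.ext hv.1 hv.2)⟩
  · exact .inr ⟨v, Subtype.ext (Prod.ext hv.1 hv.2)⟩

theorem transGen_extEdge_of_transGen_merge {u w : (G₁.merge G₂).V}
    (huw : TransGen (G₁.merge G₂).edge u w) :
    TransGen (fun a b => ExtEdge G₁ a b ∨ ExtEdge G₂ a b) u.1 w.1 :=
  TransGen.lift Subtype.val (fun _ _ h => h) _ _ huw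

theorem vcount_merge_mergeInl (h₁ : G₁.IsWDag S) (h₂ : G₂.IsWDag S)
    (hcons : Consistent S G₁ G₂) (i : Fin n) (v : G₁.V) :
    vcount S (G₁.merge G₂) i (mergeInl G₂ v) = vcount S G₁ i v := by
  refine vcount_map_eq (mergeInl G₂) (fun _ => rfl)
    (fun u hu w hw huw => h₁.injOn_label_pos hu hw (congrArg Subtype.val huw))
    (fun u w huw => .inl ⟨u, w, ⟨rfl, rfl⟩, ⟨rfl, rfl⟩, huw⟩) (fun u v huv => ?_) v
  obtain ⟨w, hw, hwv⟩ := exists_transGen_of_transGen_extEdge h₁ h₂ hcons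
    (transGen_extEdge_of_transGen_merge huv) ⟨rfl, rfl⟩
  exact ⟨w, Subtype.ext (Prod.ext hw.1 hw.2), hwv⟩

theorem vcount_merge_mergeInr (h₁ : G₁.IsWDag S) (h₂ : G₂.IsWDag S)
    (hcons : Consistent S G₁ G₂) (i : Fin n) (v : G₂.V) :
    vcount S (G₁.merge G₂) i (mergeInr G₁ v) = vcount S G₂ i v := by
  refine vcount_map_eq (mergeInr G₁) (fun _ => rfl)
    (fun u hu w hw huw => h₂.injOn_label_pos hu hw (congrArg Subtype.val huw))
    (fun u w huw => .inr ⟨u, w, ⟨rfl, rfl⟩, ⟨rfl, rfl⟩, huw⟩) (fun u v huv => ?_) v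
  obtain ⟨w, hw, hwv⟩ := exists_transGen_of_transGen_extEdge h₂ h₁ hcons.symm
    (TransGen.mono (fun _ _ => Or.symm) _ _ (transGen_extEdge_of_transGen_merge huv)) ⟨rfl, rfl⟩
  exact ⟨w, Subtype.ext (Prod.ext hw.1 hw.2), hwv⟩

end Merge

end LGraph

theorem stmt18_general {n : ℕ} {E Vl : Type} (S : E → Finset (Fin n))
    (Ev : E → (Fin n → Vl) → Prop)
    (R : Fin n → ℕ → Vl)
    (G₁ G₂ : LGraph E) (h1 : G₁.IsWDag S) (h2 : G₂.IsWDag S)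
    (hcons : LGraph.Consistent S G₁ G₂) :
    LGraph.Compat S Ev (G₁.merge G₂) R ↔
      (LGraph.Compat S Ev G₁ R ∧ LGraph.Compat S Ev G₂ R) := by
  have hinl := LGraph.vcount_merge_mergeInl h1 h2 hcons
  have hinr := LGraph.vcount_merge_mergeInr h1 h2 hcons
  constructor
  · intro hM
    refine ⟨fun v => ?_, fun v => ?_⟩
    · simpa only [LGraph.label_mergeInl, hinl] using hM (LGraph.mergeInl G₂ v)
    · simpa only [LGraph.label_mergeInr, hinr] using hM (LGraph.mergeInr G₁ v)
  · rintro ⟨hG₁, hG₂⟩ u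
    rcases LGraph.exists_mergeInl_or_mergeInr u with ⟨v, rfl⟩ | ⟨v, rfl⟩
    · simpa only [LGraph.label_mergeInl, hinl] using hG₁ v
    · simpa only [LGraph.label_mergeInr, hinr] using hG₂ v

/-- For consistent witness DAGs G₁, G₂ and a resampling table R,
the merge G₁ ∨ G₂ is compatible with R iff both G₁ and G₂ are. -/
theorem stmt18 {n : ℕ} {E Vl : Type} (S : E → Finset (Fin n))
    (Ev : E → (Fin n → Vl) → Prop)
    (hEvdep : ∀ b (x y : Fin n → Vl), (∀ i ∈ S b, x i = y i) → (Ev b x ↔ Ev b y))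
    (R : Fin n → ℕ → Vl)
    (G₁ G₂ : LGraph E) (h1 : G₁.IsWDag S) (h2 : G₂.IsWDag S)
    (hcons : LGraph.Consistent S G₁ G₂) :
    LGraph.Compat S Ev (G₁.merge G₂) R ↔
      (LGraph.Compat S Ev G₁ R ∧ LGraph.Compat S Ev G₂ R) :=
  stmt18_general S Ev R G₁ G₂ h1 h2 hcons

end LLL
end
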